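/- In any decision structure Z, if two maximal modules M1 and M2 intersect non-trivially (neither contains the other and their intersection is nonempty), then exactly one of their sources lies in the intersection M1 ∩ M2. -/

import Mathlib

/-- A labelled directed graph given by a partial out-arc map: `out v r` is the head of
the `r`-labelled arc out of `v`, if it exists.  (This encoding automatically ensures that
all arcs out of a given node have distinct labels.) -/
structure DGraph (V R : Type) where
  out : V → R → Option V

namespace DGraph

variable {V R : Type}

/-- `v` has an arc to `w` (with some label). -/
def Adj (Z : DGraph V R) (v w : V) : Prop := ∃ r, Z.out v r = some w

/-- A source: a node that is the head of no arc. -/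
def IsSource (Z : DGraph V R) (s : V) : Prop := ∀ v r, Z.out v r ≠ some s

/-- A sink: a node that is the tail of no arc. -/
def IsSink (Z : DGraph V R) (v : V) : Prop := ∀ r, Z.out v r = none

/-- `Z` is a decision structure: no parallel arcs (distinct labels out of a node have
distinct heads, so labelled arcs correspond to graph arcs), acyclic, unique source. -/
def IsDS (Z : DGraph V R) : Prop :=
  (∀ v r₁ r₂ w, Z.out v r₁ = some w → Z.out v r₂ = some w → r₁ = r₂) ∧
  (∀ v, ¬ Relation.TransGen Z.Adj v v) ∧
  (∃! s, Z.IsSource s)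

/-- Adjacency within the induced subgraph on `X`. -/
def AdjOn (Z : DGraph V R) (X : Set V) (v w : V) : Prop :=
  v ∈ X ∧ w ∈ X ∧ Z.Adj v w

/-- `s` is a source of the subgraph induced by `X`: it is in `X` and receives no arc
from a node of `X`. -/
def IsSourceOn (Z : DGraph V R) (X : Set V) (s : V) : Prop :=
  s ∈ X ∧ ∀ v ∈ X, ∀ r, Z.out v r ≠ some s

/-- The subgraph induced by `X` is a decision structure: acyclic with a unique source. -/
def IsDSOn (Z : DGraph V R) (X : Set V) : Prop :=
  (∀ v, ¬ Relation.TransGen (Z.AdjOn X) v v) ∧ (∃! s, Z.IsSourceOn X s)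

/-- `X` is a module of `Z`: the induced subgraph is a decision structure, every arc from
outside `X` into `X` goes to the source of `X`, and whenever an `r`-labelled arc leaves
`X` towards `v`, every node of `X` has an `r`-labelled out-arc going either to `v` or to
another node of `X`. -/
def IsModule (Z : DGraph V R) (X : Set V) : Prop :=
  Z.IsDSOn X ∧
  (∀ v, v ∉ X → ∀ r w, Z.out v r = some w → w ∈ X → Z.IsSourceOn X w) ∧
  (∀ x ∈ X, ∀ r v, Z.out x r = some v → v ∉ X →
      ∀ y ∈ X, ∃ u, Z.out y r = some u ∧ (u = v ∨ u ∈ X))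

end DGraph

namespace DGraph

variable {V R : Type}

/-- `P` is a partition of the node set. -/
def IsPartition (P : Set (Set V)) : Prop :=
  ∀ v : V, ∃! B, B ∈ P ∧ v ∈ B

/-- A modular partition: a partition of the node set all of whose blocks are modules. -/
def IsModularPartition (Z : DGraph V R) (P : Set (Set V)) : Prop :=
  IsPartition P ∧ ∀ B ∈ P, Z.IsModule B

/-- A maximal module: a proper module contained in no module other than the whole node set. -/
def IsMaximalModule (Z : DGraph V R) (M : Set V) : Prop :=
  Z.IsModule M ∧ M ≠ Set.univ ∧
  ∀ M', Z.IsModule M' → M ⊆ M' → M' = M ∨ M' = Set.univ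

/-- Quotient adjacency between two blocks: they are distinct and some arc of `Z` joins them. -/
def InterAdj (Z : DGraph V R) (B C : Set V) : Prop :=
  B ≠ C ∧ ∃ b ∈ B, ∃ c ∈ C, Z.Adj b c

end DGraph

/-!
If neither source lay in `M₁ ∩ M₂`, a path inside `M₁` from `s₁` to a common node would
enter `M₂` through a node other than `s₂`. If both did, acyclicity forces `s₁ = s₂ =: s`;
a path inside `M₁` from `s` to a node of `M₁ \ M₂` leaves `M₂` along some `r`-arc, and
then every node of `M₂ \ M₁` has an `r`-arc staying in `M₂ \ M₁` (landing in `M₁` would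
mean landing on `s`), which is impossible in a finite acyclic graph.
-/

namespace DGraph

variable {V R : Type}

section Acyclic

variable {r : V → V → Prop}

lemma wellFounded_of_acyclic [Finite V] (h : ∀ v, ¬ Relation.TransGen r v v) :
    WellFounded r :=
  haveI : IsTrans V (Relation.TransGen r) := ⟨fun _ _ _ => Relation.TransGen.trans⟩
  haveI : Std.Irrefl (Relation.TransGen r) := ⟨h⟩
  Subrelation.wf Relation.TransGen.single (Finite.wellFounded_of_trans_of_irrefl _)

lemma exists_forall_not_rel_of_acyclic [Finite V] (h : ∀ v, ¬ Relation.TransGen r v v)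
    {S : Set V} (hS : S.Nonempty) : ∃ m ∈ S, ∀ u ∈ S, ¬ r m u :=
  (wellFounded_of_acyclic (r := Function.swap r)
    fun v hv => h v (Relation.transGen_swap.mp hv)).has_min S hS

lemma eq_of_reflTransGen_of_reflTransGen (h : ∀ v, ¬ Relation.TransGen r v v) {a b : V}
    (hab : Relation.ReflTransGen r a b) (hba : Relation.ReflTransGen r b a) : a = b := by
  rcases Relation.reflTransGen_iff_eq_or_transGen.mp hab with rfl | hab
  · rfl
  · exact absurd (hab.trans_left hba) (h a)

end Acyclic

variable {Z : DGraph V R} {X Y M₁ M₂ : Set V} {s s₁ s₂ : V}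

lemma IsDSOn.eq_of_isSourceOn (hX : Z.IsDSOn X) (hs : Z.IsSourceOn X s) {t : V}
    (ht : Z.IsSourceOn X t) : t = s :=
  hX.2.unique ht hs

lemma IsDSOn.reflTransGen_of_isSourceOn [Finite V] (hX : Z.IsDSOn X)
    (hs : Z.IsSourceOn X s) {x : V} (hx : x ∈ X) : Relation.ReflTransGen (Z.AdjOn X) s x := by
  induction x using (wellFounded_of_acyclic hX.1).induction with
  | _ x ih =>
    by_cases hxs : Z.IsSourceOn X x
    · rw [hX.eq_of_isSourceOn hs hxs]
    · obtain ⟨v, hv, r, hvx⟩ : ∃ v ∈ X, ∃ r, Z.out v r = some x := by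
        simpa [IsSourceOn, hx] using hxs
      have hadj : Z.AdjOn X v x := ⟨hv, hx, r, hvx⟩
      exact (ih v hadj hv).tail hadj

lemma exists_arc_leaving_of_reflTransGen {a b : V} (h : Relation.ReflTransGen (Z.AdjOn X) a b)
    (ha : a ∈ Y) (hb : b ∉ Y) : ∃ x ∈ X ∩ Y, ∃ y ∈ X \ Y, ∃ r, Z.out x r = some y := by
  induction h with
  | refl => exact absurd ha hb
  | @tail c d _ hcd ih =>
    by_cases hc : c ∈ Y
    · obtain ⟨hcX, hdX, r, hr⟩ := hcd
      exact ⟨c, ⟨hcX, hc⟩, d, ⟨hdX, hb⟩, r, hr⟩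
    · exact ih hc

lemma IsModule.eq_source_of_out (hX : Z.IsModule X) (hs : Z.IsSourceOn X s) {v w : V} {r : R}
    (hv : v ∉ X) (hvw : Z.out v r = some w) (hw : w ∈ X) : w = s :=
  hX.1.eq_of_isSourceOn hs (hX.2.1 v hv r w hvw hw)

lemma source_mem_or_source_mem [Finite V] (hM₁ : Z.IsDSOn M₁) (hM₂ : Z.IsModule M₂)
    (hs₁ : Z.IsSourceOn M₁ s₁) (hs₂ : Z.IsSourceOn M₂ s₂) (hne : (M₁ ∩ M₂).Nonempty) :
    s₁ ∈ M₂ ∨ s₂ ∈ M₁ := by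
  refine or_iff_not_imp_left.mpr fun hs₁₂ => ?_
  obtain ⟨x, hx₁, hx₂⟩ := hne
  obtain ⟨v, ⟨-, hv⟩, w, ⟨hw₁, hw⟩, r, hvw⟩ := exists_arc_leaving_of_reflTransGen (Y := M₂ᶜ)
    (hM₁.reflTransGen_of_isSourceOn hs₁ hx₁) hs₁₂ (not_not_intro hx₂)
  rwa [← hM₂.eq_source_of_out hs₂ hv hvw (not_not.mp hw)]

lemma source_eq_of_source_mem_of_source_mem [Finite V]
    (hZ : ∀ v, ¬ Relation.TransGen Z.Adj v v) (hM₁ : Z.IsDSOn M₁) (hM₂ : Z.IsDSOn M₂)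
    (hs₁ : Z.IsSourceOn M₁ s₁) (hs₂ : Z.IsSourceOn M₂ s₂) (h₁ : s₁ ∈ M₂) (h₂ : s₂ ∈ M₁) :
    s₁ = s₂ :=
  eq_of_reflTransGen_of_reflTransGen hZ
    (Relation.ReflTransGen.mono (fun _ _ h => h.2.2) _ _ (hM₁.reflTransGen_of_isSourceOn hs₁ h₂))
    (Relation.ReflTransGen.mono (fun _ _ h => h.2.2) _ _ (hM₂.reflTransGen_of_isSourceOn hs₂ h₁))

lemma not_isSourceOn_of_not_subset [Finite V] (hM₁ : Z.IsModule M₁) (hM₂ : Z.IsModule M₂)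
    (h₁₂ : ¬ M₁ ⊆ M₂) (h₂₁ : ¬ M₂ ⊆ M₁) (hs₁ : Z.IsSourceOn M₁ s) : ¬ Z.IsSourceOn M₂ s := by
  intro hs₂
  obtain ⟨a, ha₁, ha₂⟩ := Set.not_subset.mp h₁₂
  obtain ⟨x, ⟨-, hx₂⟩, y, ⟨hy₁, hy₂⟩, r, hxy⟩ :=
    exists_arc_leaving_of_reflTransGen (hM₁.1.reflTransGen_of_isSourceOn hs₁ ha₁) hs₂.1 ha₂
  have hstep : ∀ b ∈ M₂ \ M₁, ∃ u ∈ M₂ \ M₁, Z.AdjOn M₂ b u := by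
    rintro b ⟨hb₂, hb₁⟩
    obtain ⟨u, hbu, rfl | hu₂⟩ := hM₂.2.2 x hx₂ r y hxy hy₂ b hb₂
    · exact absurd (hM₁.eq_source_of_out hs₁ hb₁ hbu hy₁ ▸ hs₂.1) hy₂
    · have hu₁ : u ∉ M₁ := fun hu₁ =>
        hs₂.2 b hb₂ r (hM₁.eq_source_of_out hs₁ hb₁ hbu hu₁ ▸ hbu)
      exact ⟨u, ⟨hu₂, hu₁⟩, hb₂, hu₂, r, hbu⟩
  obtain ⟨m, hm, hmin⟩ := exists_forall_not_rel_of_acyclic hM₂.1.1 (Set.sdiff_nonempty.mpr h₂₁)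
  obtain ⟨u, hu, hmu⟩ := hstep m hm
  exact hmin u hu hmu

end DGraph

/-- If two maximal modules of a decision structure intersect
non-trivially (neither contains the other, nonempty intersection), then exactly one of
their sources lies in the intersection. -/
theorem stmt_4 {V R : Type} [Fintype V] (Z : DGraph V R) (hZ : Z.IsDS)
    (M1 M2 : Set V) (hM1 : Z.IsMaximalModule M1) (hM2 : Z.IsMaximalModule M2)
    (hne : (M1 ∩ M2).Nonempty) (h12 : ¬ M1 ⊆ M2) (h21 : ¬ M2 ⊆ M1)
    (s1 s2 : V) (hs1 : Z.IsSourceOn M1 s1) (hs2 : Z.IsSourceOn M2 s2) :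
    Xor' (s1 ∈ M1 ∩ M2) (s2 ∈ M1 ∩ M2) := by
  have hsome := DGraph.source_mem_or_source_mem hM1.1.1 hM2.1 hs1 hs2 hne
  have hnot_both : ¬ (s1 ∈ M2 ∧ s2 ∈ M1) := by
    rintro ⟨h1, h2⟩
    have hs := DGraph.source_eq_of_source_mem_of_source_mem hZ.2.1 hM1.1.1 hM2.1.1 hs1 hs2 h1 h2
    exact DGraph.not_isSourceOn_of_not_subset hM1.1 hM2.1 h12 h21 hs1 (hs ▸ hs2)
  rcases hsome with h | h
  · exact Or.inl ⟨⟨hs1.1, h⟩, fun hc => hnot_both ⟨h, hc.1⟩⟩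
  · exact Or.inr ⟨⟨h, hs2.1⟩, fun hc => hnot_both ⟨hc.2, h⟩⟩
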